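/- arXiv:math/0212308 — 2 statements merged into one kernel-verified Lean document; each statement's English description precedes it below -/
import Mathlib

section
/- More generally, for every formal power series f(w) ∈ ℂ[[w]] of the form f(w) = w + (higher order terms), there exists a unique sequence of complex numbers (A_j)_{j≥1} such that exp(Σ_{j≥1} A_j w^{j+1} d/dw)·w = f(w) as formal power series. -/
open PowerSeries Complex Real

/-- The derivation `D = ∑_{j ≥ 1} A_j w^{j+1} d/dw` on `ℂ[[w]]`,
realized as `f ↦ g · f'` where `g = ∑_{j ≥ 1} A_j w^{j+1}`. -/
noncomputable def vfDeriv (A : ℕ → ℂ) (f : PowerSeries ℂ) : PowerSeries ℂ :=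
  (PowerSeries.mk fun n => if 2 ≤ n then A (n - 1) else 0) * f.derivativeFun

/-- `exp(D) = ∑_{n ≥ 0} D^n / n!` applied to `f`, defined coefficientwise; this is
well defined since `D` strictly raises the `w`-adic order, so only finitely many
terms contribute to each coefficient. -/
noncomputable def expDeriv (A : ℕ → ℂ) (f : PowerSeries ℂ) : PowerSeries ℂ :=
  PowerSeries.mk fun k =>
    ∑ n ∈ Finset.range (k + 2), ((n.factorial : ℂ))⁻¹ * PowerSeries.coeff k ((vfDeriv A)^[n] f)

/-- The series `(1/(2πi)) log(1 + 2πi·w) = ∑_{n ≥ 1} (-1)^{n+1} (2πi)^{n-1} w^n / n`. -/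
noncomputable def logSeries : PowerSeries ℂ :=
  PowerSeries.mk fun n => if n = 0 then 0 else (-1) ^ (n + 1) * (2 * π * I) ^ (n - 1) / n

/-!
The coefficient of `w^(m+2)` in `exp(D) · w` is `A (m+1)` plus a polynomial in `A 1, …, A m`:
`Dⁿ w` has order at least `n + 1`, and its coefficient of `w^k` only involves the `A i` with
`i + n ≤ k`. So `exp(D) · w = f` is a triangular system for the `A j`, which has a unique
solution by recursion on `j`.
-/

theorem existsUnique_isFixedPt_of_causal {α : Type*} [Nonempty α] (F : (ℕ → α) → ℕ → α)
    (hF : ∀ A B j, (∀ i < j, A i = B i) → F A j = F B j) :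
    ∃! A, Function.IsFixedPt F A := by
  let d : ℕ → α := fun _ => Classical.arbitrary α
  have stable : ∀ m i, i < m → F^[m] d i = F^[i + 1] d i := by
    intro m
    induction m using Nat.strong_induction_on with
    | _ m ih =>
      intro i hi
      obtain ⟨m, rfl⟩ : ∃ m', m = m' + 1 := ⟨m - 1, by omega⟩
      rw [Function.iterate_succ_apply', Function.iterate_succ_apply']
      refine hF _ _ _ fun i' hi' => ?_
      rw [ih m (by omega) i' (by omega), ih i hi i' hi']
  have fixed : Function.IsFixedPt F fun j => F^[j + 1] d j := by
    funext j
    rw [Function.iterate_succ_apply']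
    exact hF _ _ _ fun i hi => (stable j i hi).symm
  refine ⟨_, fixed, fun B hB => funext fun j => ?_⟩
  induction j using Nat.strong_induction_on with
  | _ j ih => rw [← hB]; exact (hF _ _ j ih).trans (congrFun fixed j)

lemma vfDeriv_eq_mul_derivative (A : ℕ → ℂ) (f : ℂ⟦X⟧) :
    vfDeriv A f = mk (fun n => if 2 ≤ n then A (n - 1) else 0) * d⁄dX ℂ f :=
  rfl

lemma coeff_vfDeriv (A : ℕ → ℂ) (f : ℂ⟦X⟧) (k : ℕ) :
    coeff k (vfDeriv A f) =
      ∑ p ∈ Finset.HasAntidiagonal.antidiagonal k,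
        (if 2 ≤ p.1 then A (p.1 - 1) else 0) * (coeff (p.2 + 1) f * (p.2 + 1)) := by
  simp only [vfDeriv_eq_mul_derivative, coeff_mul, coeff_mk, coeff_derivative]

lemma coeff_vfDeriv_X (A : ℕ → ℂ) (k : ℕ) :
    coeff k (vfDeriv A X) = if 2 ≤ k then A (k - 1) else 0 := by
  rw [vfDeriv_eq_mul_derivative, derivative_X, mul_one, coeff_mk]

lemma coeff_vfDeriv_eq_zero_of_lt {A : ℕ → ℂ} {f : ℂ⟦X⟧} {m : ℕ}
    (hf : ∀ j < m, coeff j f = 0) {j : ℕ} (hj : j < m + 1) : coeff j (vfDeriv A f) = 0 := by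
  rw [coeff_vfDeriv]
  refine Finset.sum_eq_zero fun p hp => ?_
  rw [Finset.HasAntidiagonal.mem_antidiagonal] at hp
  split_ifs
  · rw [hf (p.2 + 1) (by omega), zero_mul, mul_zero]
  · rw [zero_mul]

lemma coeff_vfDeriv_iterate_X_eq_zero (A : ℕ → ℂ) {n j : ℕ} (hj : j ≤ n) :
    coeff j ((vfDeriv A)^[n] X) = 0 := by
  induction n generalizing j with
  | zero => simp [Nat.le_zero.mp hj]
  | succ n ih =>
    rw [Function.iterate_succ_apply']
    exact coeff_vfDeriv_eq_zero_of_lt (m := n + 1) (fun i hi => ih (by omega)) (by omega)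

lemma coeff_vfDeriv_iterate_X_congr {A B : ℕ → ℂ} {n k : ℕ}
    (hAB : ∀ i, i + n ≤ k → A i = B i) :
    coeff k ((vfDeriv A)^[n] X) = coeff k ((vfDeriv B)^[n] X) := by
  induction n generalizing k with
  | zero => rfl
  | succ n ih =>
    rw [Function.iterate_succ_apply', Function.iterate_succ_apply', coeff_vfDeriv, coeff_vfDeriv]
    refine Finset.sum_congr rfl fun p hp => ?_
    rw [Finset.HasAntidiagonal.mem_antidiagonal] at hp
    split_ifs with h2
    · rcases le_or_gt (p.2 + 1) n with ho | ho
      · rw [coeff_vfDeriv_iterate_X_eq_zero A ho, coeff_vfDeriv_iterate_X_eq_zero B ho,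
          zero_mul, mul_zero, mul_zero]
      · rw [hAB _ (by omega), ih fun i hi => hAB i (by omega)]
    · rw [zero_mul, zero_mul]

noncomputable def expDerivTail (A : ℕ → ℂ) (m : ℕ) : ℂ :=
  ∑ n ∈ Finset.range m, ((n + 2).factorial : ℂ)⁻¹ * coeff (m + 2) ((vfDeriv A)^[n + 2] X)

lemma expDerivTail_congr {A B : ℕ → ℂ} {m : ℕ} (hAB : ∀ i ≤ m, A i = B i) :
    expDerivTail A m = expDerivTail B m :=
  Finset.sum_congr rfl fun n _ => by
    rw [coeff_vfDeriv_iterate_X_congr fun i hi => hAB i (by omega)]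

lemma coeff_expDeriv_X_of_le_one (A : ℕ → ℂ) {k : ℕ} (hk : k ≤ 1) :
    coeff k (expDeriv A X) = coeff k X := by
  rw [expDeriv, coeff_mk, Finset.sum_range_succ', Finset.sum_eq_zero fun n _ => by
    rw [coeff_vfDeriv_iterate_X_eq_zero A (by omega), mul_zero]]
  simp

lemma coeff_expDeriv_X_add_two (A : ℕ → ℂ) (m : ℕ) :
    coeff (m + 2) (expDeriv A X) = A (m + 1) + expDerivTail A m := by
  rw [expDeriv, coeff_mk, Finset.sum_range_succ, Finset.sum_range_succ,
    coeff_vfDeriv_iterate_X_eq_zero A le_rfl, coeff_vfDeriv_iterate_X_eq_zero A (by omega),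
    Finset.sum_range_succ', Finset.sum_range_succ', expDerivTail, Function.iterate_one,
    Function.iterate_zero_apply, coeff_vfDeriv_X, if_pos (by omega), coeff_X, if_neg (by omega)]
  simp only [mul_zero, add_zero, zero_add, Nat.factorial_one, Nat.cast_one, inv_one, one_mul]
  exact add_comm _ _

lemma expDeriv_X_eq_iff {f : ℂ⟦X⟧} (h0 : constantCoeff f = 0) (h1 : coeff 1 f = 1)
    (A : ℕ → ℂ) :
    expDeriv A X = f ↔ ∀ m, A (m + 1) + expDerivTail A m = coeff (m + 2) f := by
  simp only [PowerSeries.ext_iff, ← coeff_expDeriv_X_add_two]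
  refine ⟨fun h m => h (m + 2), fun h k => ?_⟩
  rcases k with _ | _ | m
  · rw [coeff_expDeriv_X_of_le_one A (by omega), coeff_zero_X,
      coeff_zero_eq_constantCoeff_apply, h0]
  · rw [coeff_expDeriv_X_of_le_one A le_rfl, coeff_one_X, h1]
  · exact h m

/-- For every formal power series `f(w) = w + (higher order terms)` in `ℂ[[w]]`, there is a
unique sequence `(A_j)_{j ≥ 1}` with `exp(∑_{j≥1} A_j w^{j+1} d/dw) · w = f(w)`. -/
theorem exists_unique_seq_expDeriv_eq (f : PowerSeries ℂ)
    (h0 : PowerSeries.constantCoeff f = 0) (h1 : PowerSeries.coeff 1 f = 1) :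
    ∃! A : ℕ → ℂ, A 0 = 0 ∧ expDeriv A PowerSeries.X = f := by
  let F : (ℕ → ℂ) → ℕ → ℂ := fun A => fun
    | 0 => 0
    | m + 1 => coeff (m + 2) f - expDerivTail A m
  have causal : ∀ A B j, (∀ i < j, A i = B i) → F A j = F B j := by
    rintro A B (_ | m) hAB
    · rfl
    · exact congrArg (coeff (m + 2) f - ·)
        (expDerivTail_congr fun i (hi : i ≤ m) => hAB i (by omega))
  have fixed_iff : ∀ A, (A 0 = 0 ∧ expDeriv A X = f) ↔ Function.IsFixedPt F A := by
    intro A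
    rw [expDeriv_X_eq_iff h0 h1, Function.IsFixedPt, funext_iff]
    refine ⟨fun ⟨hA0, hA⟩ => ?_, fun h => ⟨(h 0).symm, fun m => ?_⟩⟩
    · rintro (_ | m)
      · exact hA0.symm
      · exact sub_eq_of_eq_add (hA m).symm
    · exact add_eq_of_eq_sub (h (m + 1)).symm
  exact (existsUnique_congr fixed_iff).mpr (existsUnique_isFixedPt_of_causal F causal)
end

section
/- Let z be a complex number and set λ = e^{−2πiz}. As formal power series in the variable u = w − z over ℂ, one has (1/(2πi))·log(1 + e^{−2πiz}·u) = (e^{−2πiz}/(2πi))^{u·d/du} exp(Σ_{j≥1} A_j u^{j+1} d/du)·u, where for a nonzero complex number c, c^{u·d/du} denotes the scaling operator sending a power series Σ c_n u^n (with zero constant term) to Σ c_n c^n u^n, and the complex numbers (A_j)_{j≥1} are defined by (1/(2πi))log(1+2πi·u) = exp(Σ_{j≥1} A_j u^{j+1} d/du)·u. -/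
open PowerSeries Complex Real

/-- For `λ = e^{-2πiz}`, as formal power series in `u = w - z`:
`(1/(2πi)) log(1 + e^{-2πiz} u) = (e^{-2πiz}/(2πi))^{u d/du} exp(∑_{j≥1} A_j u^{j+1} d/du) · u`,
where `(A_j)` are defined by `(1/(2πi)) log(1+2πi·u) = exp(∑ A_j u^{j+1} d/du)·u` and the
scaling operator `μ^{u d/du}` sends `∑ c_n u^n` to `∑ c_n μ^n u^n` (i.e. `rescale μ`). -/
theorem log_shifted_eq_rescale_expDeriv (A : ℕ → ℂ) (z : ℂ)
    (hA : expDeriv A PowerSeries.X = logSeries) :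
    (PowerSeries.mk fun n =>
        if n = 0 then 0
        else (-1) ^ (n + 1) * (Complex.exp (-(2 * π * I * z))) ^ n / (2 * π * I * n)) =
      PowerSeries.rescale (Complex.exp (-(2 * π * I * z)) / (2 * π * I))
        (expDeriv A PowerSeries.X) := by
  rw [hA]
  ext n
  rw [PowerSeries.coeff_rescale, logSeries, PowerSeries.coeff_mk, PowerSeries.coeff_mk]
  rcases n with _ | m
  · simp
  · have h2 : (2 * (π:ℂ) * I) ≠ 0 := by
      simp [Real.pi_ne_zero, Complex.I_ne_zero, Complex.ofReal_ne_zero]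
    have hn : (m + 1 : ℕ) ≠ 0 := Nat.succ_ne_zero m
    simp only [if_neg hn]
    rw [div_pow, Nat.add_sub_cancel, pow_succ]
    have h2m : (2 * (π:ℂ) * I) ^ m ≠ 0 := pow_ne_zero _ h2
    have hnn : ((m:ℂ) + 1) ≠ 0 := by exact_mod_cast hn
    push_cast
    field_simp
    ring
end
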